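/- Let H be an n-dimensional complex Hilbert space (n ≥ 3), g ∈ Λ²H a unit vector, and define the operator T : Λ³H → Λ³H as the compression of 3·(P_g ⊗ I) to Λ³H (i.e., T = 3 A³ (P_g ⊗ I) A³ restricted to Λ³H, where P_g is the orthogonal projection in Λ²H onto ℂg, A³ the antisymmetrizer on H^{⊗3}). Then T is positive semidefinite and every eigenvalue of T is at most 1. -/

import Mathlib

noncomputable section
open scoped BigOperators ComplexConjugate InnerProductSpace

/-- The 1-particle space. -/
abbrev HS (n : ℕ) := EuclideanSpace ℂ (Fin n)
/-- Model for H^{⊗2}; Λ²H sits inside as the antisymmetric tensors. -/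
abbrev Sq (n : ℕ) := EuclideanSpace ℂ (Fin 2 → Fin n)
/-- Model for H^{⊗3}; Λ³H sits inside as the antisymmetric tensors. -/
abbrev Cube (n : ℕ) := EuclideanSpace ℂ (Fin 3 → Fin n)

/-- 2-particle wedge with convention ⟨u₁∧u₂, v₁∧v₂⟩ = (1/2!)det(⟨uᵢ,vⱼ⟩). -/
def wedge2 (n : ℕ) (u v : HS n) : Sq n :=
  WithLp.toLp 2 (fun x => (2 : ℂ)⁻¹ * (u (x 0) * v (x 1) - u (x 1) * v (x 0)))

/-- The 3-particle antisymmetrizer A³ on H^{⊗3}. -/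
def alt3 (n : ℕ) : Cube n →ₗ[ℂ] Cube n where
  toFun T := WithLp.toLp 2 (fun x => (6 : ℂ)⁻¹ *
    ∑ σ : Equiv.Perm (Fin 3), ((Equiv.Perm.sign σ : ℤ) : ℂ) * T (x ∘ σ))
  map_add' T S := by
    ext x
    simp [PiLp.add_apply, mul_add, Finset.sum_add_distrib]
  map_smul' c T := by
    ext x
    simp [PiLp.smul_apply, Finset.mul_sum, smul_eq_mul]
    ring_nf
    congr 1
    ext σ
    ring

/-- 3-particle wedge with convention ⟨u₁∧u₂∧u₃, v₁∧v₂∧v₃⟩ = (1/3!)det(⟨uᵢ,vⱼ⟩). -/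
def wedge3 (n : ℕ) (u v w : HS n) : Cube n :=
  WithLp.toLp 2 (fun x => (6 : ℂ)⁻¹ * ∑ σ : Equiv.Perm (Fin 3),
    ((Equiv.Perm.sign σ : ℤ) : ℂ) * (u (x (σ 0)) * v (x (σ 1)) * w (x (σ 2))))

/-- Wedge of a 2-particle function with a 1-particle function: g ∧ φ = A³(g ⊗ φ). -/
def wedgeSV (n : ℕ) (g : Sq n) (v : HS n) : Cube n :=
  alt3 n (WithLp.toLp 2 (fun x => g ![x 0, x 1] * v (x 2)))

/-- P²_g ⊗ I¹ acting on H^{⊗3}. -/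
def pgI (n : ℕ) (g : Sq n) : Cube n →ₗ[ℂ] Cube n where
  toFun T := WithLp.toLp 2 (fun x => g ![x 0, x 1] *
    ∑ y : Fin 2 → Fin n, conj (g y) * T ![y 0, y 1, x 2])
  map_add' T S := by
    ext x
    simp [PiLp.add_apply, mul_add, Finset.sum_add_distrib]
  map_smul' c T := by
    ext x
    simp [PiLp.smul_apply, Finset.mul_sum, smul_eq_mul]
    ring_nf
    congr 1
    ext y
    ring

/-- The operator 3P²_g ∧ I¹ = 3A³(P²_g ⊗ I¹)A³ (as an operator on H^{⊗3}; it
vanishes on the orthogonal complement of Λ³H and restricts to Λ³H). -/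
def T3 (n : ℕ) (g : Sq n) : Cube n →ₗ[ℂ] Cube n :=
  (3 : ℂ) • (alt3 n ∘ₗ pgI n g ∘ₗ alt3 n)

namespace St11

/-! ### Generic auxiliary lemmas -/

def sg (σ : Equiv.Perm (Fin 3)) : ℂ := ((Equiv.Perm.sign σ : ℤ) : ℂ)

lemma sg_mul (σ τ : Equiv.Perm (Fin 3)) : sg (σ * τ) = sg σ * sg τ := by simp [sg]

lemma sg_sq (σ : Equiv.Perm (Fin 3)) : sg σ * sg σ = 1 := by
  rcases Int.units_eq_one_or (Equiv.Perm.sign σ) with h | h <;> simp [sg, h]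

lemma conj_sg (σ : Equiv.Perm (Fin 3)) : conj (sg σ) = sg σ := by
  rcases Int.units_eq_one_or (Equiv.Perm.sign σ) with h | h <;> simp [sg, h]

lemma sg_inv (σ : Equiv.Perm (Fin 3)) : sg σ⁻¹ = sg σ := by simp [sg]

lemma inner_eu {ι : Type*} [Fintype ι] (u v : EuclideanSpace ℂ ι) :
    ⟪u, v⟫_ℂ = ∑ i, conj (u i) * v i := by
  rw [PiLp.inner_apply]; simp [RCLike.inner_apply]
  exact Finset.sum_congr rfl fun _ _ => mul_comm _ _

def e2 (n : ℕ) : (Fin 2 → Fin n) ≃ Fin n × Fin n where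
  toFun x := (x 0, x 1)
  invFun p := ![p.1, p.2]
  left_inv x := by funext i; fin_cases i <;> rfl
  right_inv p := rfl

def e3 (n : ℕ) : (Fin 3 → Fin n) ≃ Fin n × Fin n × Fin n where
  toFun x := (x 0, x 1, x 2)
  invFun p := ![p.1, p.2.1, p.2.2]
  left_inv x := by funext i; fin_cases i <;> rfl
  right_inv p := rfl

lemma sum2 {n : ℕ} (f : (Fin 2 → Fin n) → ℂ) :
    ∑ x : Fin 2 → Fin n, f x = ∑ a : Fin n, ∑ b : Fin n, f ![a, b] := by
  rw [← (e2 n).symm.sum_comp f, Fintype.sum_prod_type]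
  simp [e2]
  rfl

lemma sum3 {n : ℕ} (f : (Fin 3 → Fin n) → ℂ) :
    ∑ x : Fin 3 → Fin n, f x = ∑ a : Fin n, ∑ b : Fin n, ∑ c : Fin n, f ![a, b, c] := by
  rw [← (e3 n).symm.sum_comp f, Fintype.sum_prod_type]
  simp [e3, Fintype.sum_prod_type]
  rfl

lemma alt3_apply {n : ℕ} (u : Cube n) (x : Fin 3 → Fin n) :
    alt3 n u x = (6 : ℂ)⁻¹ * ∑ σ : Equiv.Perm (Fin 3), sg σ * u (x ∘ σ) := by rfl

def pcomp (n : ℕ) (σ : Equiv.Perm (Fin 3)) : (Fin 3 → Fin n) ≃ (Fin 3 → Fin n) where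
  toFun x := x ∘ σ
  invFun x := x ∘ σ.symm
  left_inv x := by funext i; simp
  right_inv x := by funext i; simp

lemma sum_pcomp {n : ℕ} (σ : Equiv.Perm (Fin 3)) (f : (Fin 3 → Fin n) → ℂ) :
    ∑ x : Fin 3 → Fin n, f (x ∘ σ) = ∑ x : Fin 3 → Fin n, f x :=
  (pcomp n σ).sum_comp f

lemma comp_cancel {n : ℕ} (x : Fin 3 → Fin n) (σ : Equiv.Perm (Fin 3)) :
    (x ∘ σ) ∘ ⇑σ⁻¹ = x := by
  funext i; simp

/-! ### The antisymmetrizer is a self-adjoint idempotent -/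

lemma symA {n : ℕ} (u v : Cube n) : ⟪alt3 n u, v⟫_ℂ = ⟪u, alt3 n v⟫_ℂ := by
  rw [inner_eu, inner_eu]
  have L : ∑ x : Fin 3 → Fin n, conj (alt3 n u x) * v x
      = ∑ σ : Equiv.Perm (Fin 3), ∑ x : Fin 3 → Fin n,
          (6:ℂ)⁻¹ * sg σ * (conj (u (x ∘ σ)) * v x) := by
    rw [Finset.sum_comm]
    refine Finset.sum_congr rfl fun x _ => ?_
    simp only [alt3_apply, map_mul, map_sum, map_inv₀, map_ofNat, conj_sg,
      Finset.sum_mul, Finset.mul_sum]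
    exact Finset.sum_congr rfl fun σ _ => by ring
  have R : ∑ x : Fin 3 → Fin n, conj (u x) * alt3 n v x
      = ∑ σ : Equiv.Perm (Fin 3), ∑ x : Fin 3 → Fin n,
          (6:ℂ)⁻¹ * sg σ * (conj (u x) * v (x ∘ σ)) := by
    rw [Finset.sum_comm]
    refine Finset.sum_congr rfl fun x _ => ?_
    simp only [alt3_apply, Finset.mul_sum]
    exact Finset.sum_congr rfl fun σ _ => by ring
  rw [L, R]
  rw [← Equiv.sum_comp (Equiv.inv (Equiv.Perm (Fin 3)))
      (fun σ => ∑ x : Fin 3 → Fin n, (6:ℂ)⁻¹ * sg σ * (conj (u x) * v (x ∘ σ)))]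
  refine Finset.sum_congr rfl fun σ _ => ?_
  simp only [Equiv.inv_apply, sg_inv]
  rw [← sum_pcomp σ (fun x => (6:ℂ)⁻¹ * sg σ * (conj (u x) * v (x ∘ ⇑σ⁻¹)))]
  refine Finset.sum_congr rfl fun x _ => ?_
  rw [comp_cancel]

lemma idemA {n : ℕ} (u : Cube n) : alt3 n (alt3 n u) = alt3 n u := by
  ext x
  have inner : ∀ σ : Equiv.Perm (Fin 3),
      alt3 n u (x ∘ σ) = (6:ℂ)⁻¹ * (sg σ * ∑ ρ : Equiv.Perm (Fin 3), sg ρ * u (x ∘ ρ)) := by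
    intro σ
    rw [alt3_apply]
    congr 1
    rw [Finset.mul_sum,
      ← Equiv.sum_comp (Equiv.mulLeft σ) (fun ρ => sg σ * (sg ρ * u (x ∘ ρ)))]
    refine Finset.sum_congr rfl fun τ _ => ?_
    have hc : x ∘ ⇑(σ * τ) = (x ∘ ⇑σ) ∘ ⇑τ := by funext i; rfl
    simp only [Equiv.coe_mulLeft]
    rw [sg_mul, hc]
    linear_combination (-(sg τ * u ((x ∘ ⇑σ) ∘ ⇑τ))) * sg_sq σ
  rw [alt3_apply, alt3_apply]
  simp only [inner]
  set S := ∑ ρ : Equiv.Perm (Fin 3), sg ρ * u (x ∘ ρ) with hS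
  have step : ∀ σ : Equiv.Perm (Fin 3), sg σ * ((6:ℂ)⁻¹ * (sg σ * S)) = (6:ℂ)⁻¹ * S := by
    intro σ
    linear_combination ((6:ℂ)⁻¹ * S) * sg_sq σ
  rw [Finset.sum_congr rfl fun σ _ => step σ, Finset.sum_const]
  have hcard : (Finset.univ : Finset (Equiv.Perm (Fin 3))).card = 6 := by
    simp [Finset.card_univ]; decide
  rw [hcard]
  ring

/-! ### The projection part -/

variable {n : ℕ}

/-- The contracted one-particle vector. -/
def wf (g : Sq n) (u : Cube n) : Fin n → ℂ :=
  fun k => ∑ y : Fin 2 → Fin n, conj (g y) * u ![y 0, y 1, k]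

lemma pgI_apply (g : Sq n) (u : Cube n) (x : Fin 3 → Fin n) :
    pgI n g u x = g ![x 0, x 1] * wf g u (x 2) := by rfl

lemma conj_wf (g : Sq n) (u : Cube n) (c : Fin n) :
    conj (wf g u c) = ∑ a : Fin n, ∑ b : Fin n, g ![a, b] * conj (u ![a, b, c]) := by
  rw [wf, map_sum, sum2 (fun y => conj (conj (g y) * u ![y 0, y 1, c]))]
  refine Finset.sum_congr rfl fun a _ => Finset.sum_congr rfl fun b _ => ?_
  simp only [map_mul, Complex.conj_conj, Matrix.cons_val_zero, Matrix.cons_val_one,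
    Matrix.head_cons]

lemma inner_pgI (g : Sq n) (u : Cube n) :
    ⟪u, pgI n g u⟫_ℂ = ∑ c : Fin n, conj (wf g u c) * wf g u c := by
  rw [inner_eu]
  calc ∑ x : Fin 3 → Fin n, conj (u x) * pgI n g u x
      = ∑ a : Fin n, ∑ b : Fin n, ∑ c : Fin n,
          conj (u ![a, b, c]) * (g ![a, b] * wf g u c) := by
        rw [sum3 (fun x => conj (u x) * pgI n g u x)]
        refine Finset.sum_congr rfl fun a _ => Finset.sum_congr rfl fun b _ =>
          Finset.sum_congr rfl fun c _ => ?_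
        rw [pgI_apply]
        simp only [Matrix.cons_val_zero, Matrix.cons_val_one, Matrix.head_cons,
          Matrix.cons_val_two, Matrix.tail_cons]
    _ = ∑ c : Fin n, (∑ a : Fin n, ∑ b : Fin n, g ![a, b] * conj (u ![a, b, c])) * wf g u c := by
        have h1 : ∀ a : Fin n, ∑ b : Fin n, ∑ c : Fin n,
            conj (u ![a, b, c]) * (g ![a, b] * wf g u c)
            = ∑ c : Fin n, ∑ b : Fin n, conj (u ![a, b, c]) * (g ![a, b] * wf g u c) :=
          fun a => Finset.sum_comm
        simp only [h1]
        rw [Finset.sum_comm]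
        refine Finset.sum_congr rfl fun c _ => ?_
        simp only [Finset.sum_mul]
        exact Finset.sum_congr rfl fun a _ => Finset.sum_congr rfl fun b _ => by ring
    _ = ∑ c : Fin n, conj (wf g u c) * wf g u c := by
        refine Finset.sum_congr rfl fun c _ => ?_
        rw [conj_wf]

/-! ### Antisymmetry of g -/

lemma g_swap (g : Sq n) (hanti : ∀ y : Fin 2 → Fin n, g (y ∘ Equiv.swap 0 1) = -g y)
    (a b : Fin n) : g ![b, a] = - g ![a, b] := by
  have h := hanti ![a, b]
  have hv : (![a, b] : Fin 2 → Fin n) ∘ ⇑(Equiv.swap 0 1) = ![b, a] := by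
    funext i
    fin_cases i <;>
      simp [Equiv.swap_apply_left, Equiv.swap_apply_right]
  rw [hv] at h
  exact h

/-! ### The key computation -/

/-- the contraction g with h. -/
def cc (g : Sq n) (h : Fin n → ℂ) : Fin n → ℂ := fun a => ∑ m : Fin n, g ![a, m] * conj (h m)

lemma conj_cc (g : Sq n) (h : Fin n → ℂ) (a : Fin n) :
    conj (cc g h a) = ∑ m : Fin n, conj (g ![a, m]) * h m := by
  rw [cc, map_sum]
  exact Finset.sum_congr rfl fun m _ => by rw [map_mul, Complex.conj_conj]

lemma factor3 (p : Fin n → Fin n → ℂ) (q : Fin n → ℂ) :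
    ∑ a : Fin n, ∑ b : Fin n, ∑ c : Fin n, p a b * q c
      = (∑ a : Fin n, ∑ b : Fin n, p a b) * ∑ c : Fin n, q c := by
  rw [Finset.sum_mul]
  refine Finset.sum_congr rfl fun a _ => ?_
  rw [Finset.sum_mul]
  refine Finset.sum_congr rfl fun b _ => ?_
  rw [Finset.mul_sum]

lemma factor_link (p q : Fin n → Fin n → ℂ) :
    ∑ a : Fin n, ∑ b : Fin n, ∑ c : Fin n, p a b * q a c
      = ∑ a : Fin n, (∑ b : Fin n, p a b) * ∑ c : Fin n, q a c := by
  refine Finset.sum_congr rfl fun a _ => ?_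
  rw [Finset.sum_mul]
  refine Finset.sum_congr rfl fun b _ => ?_
  rw [Finset.mul_sum]

def c3 : Equiv.Perm (Fin 3) := Equiv.swap 0 1 * Equiv.swap 1 2

lemma key (g : Sq n) (hanti : ∀ y : Fin 2 → Fin n, g (y ∘ Equiv.swap 0 1) = -g y)
    (h : Fin n → ℂ) (z : Cube n) (hzf : ∀ x, z x = g ![x 0, x 1] * h (x 2)) :
    ⟪z, alt3 n z⟫_ℂ
      = (6:ℂ)⁻¹ * (2 * ((∑ y : Fin 2 → Fin n, conj (g y) * g y) * ∑ c : Fin n, conj (h c) * h c)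
          - 4 * ∑ a : Fin n, conj (cc g h a) * cc g h a) := by
  have hzabc : ∀ a b c : Fin n, z ![a, b, c] = g ![a, b] * h c := by
    intro a b c
    rw [hzf]
    simp only [Matrix.cons_val_zero, Matrix.cons_val_one, Matrix.head_cons,
      Matrix.cons_val_two, Matrix.tail_cons]
  -- expansion of the inner product
  have expand : ⟪z, alt3 n z⟫_ℂ
      = (6:ℂ)⁻¹ * ∑ σ : Equiv.Perm (Fin 3), sg σ *
          ∑ x : Fin 3 → Fin n, conj (z x) * z (x ∘ σ) := by
    rw [inner_eu]
    calc ∑ x : Fin 3 → Fin n, conj (z x) * alt3 n z x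
        = ∑ x : Fin 3 → Fin n, ∑ σ : Equiv.Perm (Fin 3),
            (6:ℂ)⁻¹ * (sg σ * (conj (z x) * z (x ∘ σ))) := by
          refine Finset.sum_congr rfl fun x _ => ?_
          rw [alt3_apply, Finset.mul_sum, Finset.mul_sum]
          exact Finset.sum_congr rfl fun σ _ => by ring
      _ = ∑ σ : Equiv.Perm (Fin 3), (6:ℂ)⁻¹ *
            (sg σ * ∑ x : Fin 3 → Fin n, conj (z x) * z (x ∘ σ)) := by
          rw [Finset.sum_comm]
          exact Finset.sum_congr rfl fun σ _ => by rw [Finset.mul_sum, Finset.mul_sum]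
      _ = (6:ℂ)⁻¹ * ∑ σ : Equiv.Perm (Fin 3), sg σ *
            ∑ x : Fin 3 → Fin n, conj (z x) * z (x ∘ σ) := by rw [Finset.mul_sum]
  rw [expand]
  -- notation
  set GG := ∑ a : Fin n, ∑ b : Fin n, conj (g ![a, b]) * g ![a, b] with hGG
  set HH := ∑ c : Fin n, conj (h c) * h c with hHH
  set CC := ∑ a : Fin n, conj (cc g h a) * cc g h a with hCC
  -- evaluation of compositions with explicit permutations
  have comp1 : ∀ x : Fin 3 → Fin n, x ∘ ⇑(1 : Equiv.Perm (Fin 3)) = x := fun x => by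
    funext i; rfl
  have hswap01 : ∀ a b c : Fin n, (![a, b, c] : Fin 3 → Fin n) ∘ ⇑(Equiv.swap 0 1) = ![b, a, c] := by
    intro a b c
    have h0 : (Equiv.swap (0:Fin 3) 1) 0 = 1 := by decide
    have h1 : (Equiv.swap (0:Fin 3) 1) 1 = 0 := by decide
    have h2 : (Equiv.swap (0:Fin 3) 1) 2 = 2 := by decide
    funext i
    fin_cases i <;>
      simp [Function.comp, h0, h1, h2]
  have hswap02 : ∀ a b c : Fin n, (![a, b, c] : Fin 3 → Fin n) ∘ ⇑(Equiv.swap 0 2) = ![c, b, a] := by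
    intro a b c
    have h0 : (Equiv.swap (0:Fin 3) 2) 0 = 2 := by decide
    have h1 : (Equiv.swap (0:Fin 3) 2) 1 = 1 := by decide
    have h2 : (Equiv.swap (0:Fin 3) 2) 2 = 0 := by decide
    funext i
    fin_cases i <;>
      simp [Function.comp, h0, h1, h2]
  have hswap12 : ∀ a b c : Fin n, (![a, b, c] : Fin 3 → Fin n) ∘ ⇑(Equiv.swap 1 2) = ![a, c, b] := by
    intro a b c
    have h0 : (Equiv.swap (1:Fin 3) 2) 0 = 0 := by decide
    have h1 : (Equiv.swap (1:Fin 3) 2) 1 = 2 := by decide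
    have h2 : (Equiv.swap (1:Fin 3) 2) 2 = 1 := by decide
    funext i
    fin_cases i <;>
      simp [Function.comp, h0, h1, h2]
  have hc3 : ∀ a b c : Fin n, (![a, b, c] : Fin 3 → Fin n) ∘ ⇑c3 = ![b, c, a] := by
    intro a b c
    have h0 : c3 0 = 1 := by decide
    have h1 : c3 1 = 2 := by decide
    have h2 : c3 2 = 0 := by decide
    funext i
    fin_cases i <;>
      simp [Function.comp, h0, h1, h2]
  have hc3sq : ∀ a b c : Fin n, (![a, b, c] : Fin 3 → Fin n) ∘ ⇑(c3 * c3) = ![c, a, b] := by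
    intro a b c
    have h0 : (c3 * c3) 0 = 2 := by decide
    have h1 : (c3 * c3) 1 = 0 := by decide
    have h2 : (c3 * c3) 2 = 1 := by decide
    funext i
    fin_cases i <;>
      simp [Function.comp, h0, h1, h2]
  -- inner-sum evaluations
  have ev1 : ∀ a : Fin n, ∑ b : Fin n, conj (g ![a, b]) * h b = conj (cc g h a) := fun a =>
    (conj_cc g h a).symm
  have ev2 : ∀ a : Fin n, ∑ c : Fin n, g ![a, c] * conj (h c) = cc g h a := fun a => rfl
  have ev3 : ∀ b : Fin n, ∑ a : Fin n, conj (g ![a, b]) * h a = -conj (cc g h b) := by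
    intro b
    rw [conj_cc, ← Finset.sum_neg_distrib]
    refine Finset.sum_congr rfl fun a _ => ?_
    rw [g_swap g hanti a b, map_neg]
    ring
  have ev4 : ∀ b : Fin n, ∑ c : Fin n, g ![c, b] * conj (h c) = -cc g h b := by
    intro b
    rw [show cc g h b = ∑ m : Fin n, g ![b, m] * conj (h m) from rfl,
      ← Finset.sum_neg_distrib]
    refine Finset.sum_congr rfl fun c _ => ?_
    rw [g_swap g hanti b c]
    ring
  -- the six permutation sums
  have F1 : ∑ x : Fin 3 → Fin n, conj (z x) * z (x ∘ ⇑(1 : Equiv.Perm (Fin 3))) = GG * HH := by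
    refine (sum3 _).trans ?_
    conv_rhs => rw [hGG, hHH,
      ← factor3 (fun a b => conj (g ![a, b]) * g ![a, b]) (fun c => conj (h c) * h c)]
    refine Finset.sum_congr rfl fun a _ => Finset.sum_congr rfl fun b _ =>
      Finset.sum_congr rfl fun c _ => ?_
    rw [comp1, hzabc, map_mul]
    ring
  have F01 : ∑ x : Fin 3 → Fin n, conj (z x) * z (x ∘ ⇑(Equiv.swap (0:Fin 3) 1))
      = -(GG * HH) := by
    refine (sum3 _).trans ?_
    conv_rhs => rw [hGG, hHH,
      ← factor3 (fun a b => conj (g ![a, b]) * g ![a, b]) (fun c => conj (h c) * h c)]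
    simp only [← Finset.sum_neg_distrib]
    refine Finset.sum_congr rfl fun a _ => Finset.sum_congr rfl fun b _ =>
      Finset.sum_congr rfl fun c _ => ?_
    rw [hswap01, hzabc, hzabc, g_swap g hanti a b, map_mul]
    ring
  have F12 : ∑ x : Fin 3 → Fin n, conj (z x) * z (x ∘ ⇑(Equiv.swap (1:Fin 3) 2)) = CC := by
    refine (sum3 _).trans ?_
    have hr : CC = ∑ a : Fin n, (∑ b : Fin n, conj (g ![a, b]) * h b)
        * ∑ c : Fin n, g ![a, c] * conj (h c) := by
      rw [hCC]
      exact Finset.sum_congr rfl fun a _ => by rw [ev1, ev2]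
    rw [hr, ← factor_link (fun a b => conj (g ![a, b]) * h b) (fun a c => g ![a, c] * conj (h c))]
    refine Finset.sum_congr rfl fun a _ => Finset.sum_congr rfl fun b _ =>
      Finset.sum_congr rfl fun c _ => ?_
    rw [hswap12, hzabc, hzabc, map_mul]
    ring
  have F02 : ∑ x : Fin 3 → Fin n, conj (z x) * z (x ∘ ⇑(Equiv.swap (0:Fin 3) 2)) = CC := by
    refine (sum3 _).trans (Finset.sum_comm.trans ?_)
    have hr : CC = ∑ b : Fin n, (∑ a : Fin n, conj (g ![a, b]) * h a)
        * ∑ c : Fin n, g ![c, b] * conj (h c) := by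
      rw [hCC]
      refine Finset.sum_congr rfl fun b _ => ?_
      rw [ev3, ev4]
      ring
    rw [hr, ← factor_link (fun b a => conj (g ![a, b]) * h a) (fun b c => g ![c, b] * conj (h c))]
    refine Finset.sum_congr rfl fun b _ => Finset.sum_congr rfl fun a _ =>
      Finset.sum_congr rfl fun c _ => ?_
    rw [hswap02, hzabc, hzabc, map_mul]
    ring
  have Fc3 : ∑ x : Fin 3 → Fin n, conj (z x) * z (x ∘ ⇑c3) = -CC := by
    refine (sum3 _).trans (Finset.sum_comm.trans ?_)
    have hr : -CC = ∑ b : Fin n, (∑ a : Fin n, conj (g ![a, b]) * h a)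
        * ∑ c : Fin n, g ![b, c] * conj (h c) := by
      rw [hCC, ← Finset.sum_neg_distrib]
      refine Finset.sum_congr rfl fun b _ => ?_
      rw [ev3, ev2]
      ring
    rw [hr, ← factor_link (fun b a => conj (g ![a, b]) * h a) (fun b c => g ![b, c] * conj (h c))]
    refine Finset.sum_congr rfl fun b _ => Finset.sum_congr rfl fun a _ =>
      Finset.sum_congr rfl fun c _ => ?_
    rw [hc3, hzabc, hzabc, map_mul]
    ring
  have Fc3sq : ∑ x : Fin 3 → Fin n, conj (z x) * z (x ∘ ⇑(c3 * c3)) = -CC := by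
    refine (sum3 _).trans ?_
    have hr : -CC = ∑ a : Fin n, (∑ b : Fin n, conj (g ![a, b]) * h b)
        * ∑ c : Fin n, g ![c, a] * conj (h c) := by
      rw [hCC, ← Finset.sum_neg_distrib]
      refine Finset.sum_congr rfl fun a _ => ?_
      rw [ev1, ev4]
      ring
    rw [hr, ← factor_link (fun a b => conj (g ![a, b]) * h b) (fun a c => g ![c, a] * conj (h c))]
    refine Finset.sum_congr rfl fun a _ => Finset.sum_congr rfl fun b _ =>
      Finset.sum_congr rfl fun c _ => ?_
    rw [hc3sq, hzabc, hzabc, map_mul]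
    ring
  -- sum over the six permutations
  have huniv : (Finset.univ : Finset (Equiv.Perm (Fin 3)))
      = {1, Equiv.swap 0 1, Equiv.swap 0 2, Equiv.swap 1 2, c3, c3 * c3} := by decide
  have s1 : sg 1 = 1 := by simp [sg]
  have s01 : sg (Equiv.swap 0 1) = -1 := by
    have : Equiv.Perm.sign (Equiv.swap (0:Fin 3) 1) = -1 := by decide
    simp [sg, this]
  have s02 : sg (Equiv.swap 0 2) = -1 := by
    have : Equiv.Perm.sign (Equiv.swap (0:Fin 3) 2) = -1 := by decide
    simp [sg, this]
  have s12 : sg (Equiv.swap 1 2) = -1 := by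
    have : Equiv.Perm.sign (Equiv.swap (1:Fin 3) 2) = -1 := by decide
    simp [sg, this]
  have sc3 : sg c3 = 1 := by
    have : Equiv.Perm.sign c3 = 1 := by decide
    simp [sg, this]
  have sc3sq : sg (c3 * c3) = 1 := by
    have : Equiv.Perm.sign (c3 * c3) = 1 := by decide
    simp [sg, this]
  rw [huniv, Finset.sum_insert (by decide), Finset.sum_insert (by decide),
    Finset.sum_insert (by decide), Finset.sum_insert (by decide),
    Finset.sum_insert (by decide), Finset.sum_singleton]
  rw [F1, F01, F02, F12, Fc3, Fc3sq, s1, s01, s02, s12, sc3, sc3sq]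
  rw [sum2 (fun y => conj (g y) * g y), ← hGG]
  ring

lemma norm_sq_sum (f : Fin n → ℂ) :
    ∑ c : Fin n, conj (f c) * f c = ((∑ c : Fin n, Complex.normSq (f c) : ℝ) : ℂ) := by
  push_cast
  exact Finset.sum_congr rfl fun c _ => Complex.normSq_eq_conj_mul_self.symm

end St11

/-- T = 3A³(P_g⊗I)A³ is positive semidefinite and every eigenvalue is at most 1. -/
theorem stmt11 (n : ℕ) (hn : 3 ≤ n) (g : Sq n) (hg : ‖g‖ = 1)
    (hanti : ∀ y : Fin 2 → Fin n, g (y ∘ Equiv.swap 0 1) = -g y) :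
    (∀ v : Cube n, 0 ≤ (⟪v, T3 n g v⟫_ℂ).re ∧ (⟪v, T3 n g v⟫_ℂ).im = 0) ∧
    (∀ (μ : ℂ) (v : Cube n), v ≠ 0 → T3 n g v = μ • v → μ.im = 0 ∧ μ.re ≤ 1) := by
  classical
  have hgsum : ∑ y : Fin 2 → Fin n, conj (g y) * g y = 1 := by
    have h := inner_self_eq_norm_sq_to_K (𝕜 := ℂ) (E := Sq n) g
    rw [hg, St11.inner_eu] at h
    simpa using h
  -- the quadratic form of T3
  have hinner : ∀ v : Cube n, ⟪v, T3 n g v⟫_ℂ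
      = 3 * ∑ c : Fin n, conj (St11.wf g (alt3 n v) c) * St11.wf g (alt3 n v) c := by
    intro v
    have h1 : T3 n g v = (3 : ℂ) • (alt3 n (pgI n g (alt3 n v))) := rfl
    rw [h1, inner_smul_right, ← St11.symA, St11.inner_pgI]
  have hps : ∀ v : Cube n, ⟪v, T3 n g v⟫_ℂ
      = (((3 * ∑ c : Fin n, Complex.normSq (St11.wf g (alt3 n v) c)) : ℝ) : ℂ) := by
    intro v
    rw [hinner v, St11.norm_sq_sum]
    push_cast
    ring
  have hpos : ∀ v : Cube n, (0:ℝ) ≤ 3 * ∑ c : Fin n, Complex.normSq (St11.wf g (alt3 n v) c) := by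
    intro v
    have : (0:ℝ) ≤ ∑ c : Fin n, Complex.normSq (St11.wf g (alt3 n v) c) :=
      Finset.sum_nonneg fun c _ => Complex.normSq_nonneg _
    linarith
  -- the key quadratic inequality ⟨Tv, Tv⟩ ≤ ⟨v, Tv⟩
  have hTT : ∀ v : Cube n, (⟪T3 n g v, T3 n g v⟫_ℂ).re ≤ (⟪v, T3 n g v⟫_ℂ).re := by
    intro v
    set u := alt3 n v with hu
    set h := St11.wf g u with hh
    set z := pgI n g u with hzdef
    have hz : ∀ x : Fin 3 → Fin n, z x = g ![x 0, x 1] * h (x 2) := fun x => by rfl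
    have hTv : T3 n g v = (3 : ℂ) • (alt3 n z) := rfl
    have e1 : ⟪T3 n g v, T3 n g v⟫_ℂ = 9 * ⟪z, alt3 n z⟫_ℂ := by
      rw [hTv, inner_smul_left, inner_smul_right, St11.symA, St11.idemA, ← St11.symA]
      rw [show conj (3:ℂ) = 3 from map_ofNat _ 3]
      ring
    have e2 : ⟪z, alt3 n z⟫_ℂ
        = (6:ℂ)⁻¹ * (2 * ((1:ℂ) * ∑ c : Fin n, conj (h c) * h c)
            - 4 * ∑ a : Fin n, conj (St11.cc g h a) * St11.cc g h a) := by
      rw [St11.key g hanti h z hz, hgsum]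
    rw [e1, e2, hinner v, St11.norm_sq_sum, St11.norm_sq_sum]
    have hCnn : (0:ℝ) ≤ ∑ c : Fin n, Complex.normSq (St11.cc g h c) :=
      Finset.sum_nonneg fun a _ => Complex.normSq_nonneg _
    have expl : (9 * ((6:ℂ)⁻¹ * (2 * ((1:ℂ) * ((∑ c : Fin n, Complex.normSq (h c) : ℝ):ℂ))
          - 4 * ((∑ c : Fin n, Complex.normSq (St11.cc g h c) : ℝ):ℂ))))
        = (((3 * (∑ c : Fin n, Complex.normSq (h c))
            - 6 * (∑ c : Fin n, Complex.normSq (St11.cc g h c)) : ℝ)):ℂ) := by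
      push_cast
      ring
    have expr : ((3:ℂ) * ((∑ c : Fin n, Complex.normSq (h c) : ℝ):ℂ))
        = (((3 * ∑ c : Fin n, Complex.normSq (h c) : ℝ)):ℂ) := by
      push_cast
      ring
    rw [expl, expr, Complex.ofReal_re, Complex.ofReal_re]
    linarith
  refine ⟨fun v => ?_, fun μ v hv hev => ?_⟩
  · rw [hps v]
    exact ⟨by simpa using hpos v, by simp⟩
  · have hvv : ⟪v, v⟫_ℂ = ((‖v‖^2 : ℝ) : ℂ) := by
      rw [inner_self_eq_norm_sq_to_K]
      norm_cast
    have hnv : (0:ℝ) < ‖v‖^2 := by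
      have : ‖v‖ ≠ 0 := norm_ne_zero_iff.mpr hv
      positivity
    have h1 : ⟪v, T3 n g v⟫_ℂ = μ * ((‖v‖^2 : ℝ) : ℂ) := by
      rw [hev, inner_smul_right, hvv]
    have him : μ.im = 0 := by
      have h3 : (μ * ((‖v‖^2:ℝ):ℂ)).im = 0 := by
        rw [← h1, hps v]
        simp
      rw [Complex.mul_im, Complex.ofReal_im, Complex.ofReal_re] at h3
      simp only [mul_zero, zero_add] at h3
      rcases mul_eq_zero.mp h3 with h4 | h4
      · exact h4
      · exact absurd h4 hnv.ne'
    refine ⟨him, ?_⟩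
    have hre : (⟪v, T3 n g v⟫_ℂ).re = μ.re * ‖v‖^2 := by
      rw [h1, Complex.mul_re, Complex.ofReal_im, Complex.ofReal_re, him]
      ring
    have hTTre : (⟪T3 n g v, T3 n g v⟫_ℂ).re = μ.re^2 * ‖v‖^2 := by
      rw [hev, inner_smul_left, inner_smul_right, hvv, ← mul_assoc, mul_comm (conj μ) μ,
        Complex.mul_conj, ← Complex.ofReal_mul, Complex.ofReal_re, Complex.normSq_apply, him]
      ring
    have hch := hTT v
    rw [hTTre, hre] at hch
    have hsq : μ.re^2 ≤ μ.re := by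
      have := (mul_le_mul_iff_of_pos_right hnv).mp hch
      exact this
    nlinarith [sq_nonneg (μ.re - 1)]

end
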